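/- With A = λ diag(p)^{-1} (p > 0 entrywise, λ > 0) and B = Ẽ of full column rank, the Schur-complement solution of [[A,B],[Bᵀ,0]][∇_c ℓ; −∇_{ab} ℓ] = [−g; 0] is given explicitly by ∇_{ab} ℓ = (Ẽᵀ diag(p) Ẽ)^{-1} Ẽᵀ diag(p) g and ∇_c ℓ = −λ^{-1}(diag(p) g − diag(p) Ẽ ∇_{ab} ℓ). -/

import Mathlib

open Matrix

/-! Eliminating the first block row of the saddle-point system expresses `∇_c ℓ` through
`∇_{ab} ℓ`; substituting into the second block row gives the normal equations
`Ẽᵀ diag(p) Ẽ ∇_{ab} ℓ = Ẽᵀ diag(p) g` (the factor `λ⁻¹` cancels), whose matrix is positive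
definite because `diag(p)` is and `Ẽ` is injective. -/

namespace Matrix

theorem fromBlocks_mulVec_sumElim_eq_sumElim_iff {l m n o α : Type*} [Fintype m] [Fintype n]
    [NonUnitalNonAssocSemiring α] (A : Matrix l m α) (B : Matrix l n α) (C : Matrix o m α)
    (D : Matrix o n α) (x : m → α) (y : n → α) (u : l → α) (v : o → α) :
    fromBlocks A B C D *ᵥ Sum.elim x y = Sum.elim u v ↔
      A *ᵥ x + B *ᵥ y = u ∧ C *ᵥ x + D *ᵥ y = v := by
  rw [fromBlocks_mulVec, Sum.elim_comp_inl, Sum.elim_comp_inr, Sum.elim_eq_iff]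

section CommRing

variable {m n R : Type*} [Fintype m] [DecidableEq m] [Fintype n] [DecidableEq n] [CommRing R]

theorem eq_nonsing_inv_mulVec_of_mulVec_eq {M : Matrix n n R} (hM : IsUnit M.det)
    {x b : n → R} (h : M *ᵥ x = b) : x = M⁻¹ *ᵥ b := by
  rw [← h, mulVec_mulVec, nonsing_inv_mul M hM, one_mulVec]

theorem saddlePoint_solution {A : Matrix m m R} {B : Matrix m n R} (hA : IsUnit A.det)
    (hS : IsUnit (Bᵀ * A⁻¹ * B).det) {x g : m → R} {y : n → R}
    (h : fromBlocks A B Bᵀ 0 *ᵥ Sum.elim x (-y) = Sum.elim (-g) 0) :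
    y = (Bᵀ * A⁻¹ * B)⁻¹ *ᵥ (Bᵀ *ᵥ (A⁻¹ *ᵥ g)) ∧ x = A⁻¹ *ᵥ (B *ᵥ y - g) := by
  obtain ⟨hrow, hcol⟩ := (fromBlocks_mulVec_sumElim_eq_sumElim_iff ..).mp h
  have hx : x = A⁻¹ *ᵥ (B *ᵥ y - g) :=
    eq_nonsing_inv_mulVec_of_mulVec_eq hA (by rw [mulVec_neg] at hrow; linear_combination hrow)
  refine ⟨eq_nonsing_inv_mulVec_of_mulVec_eq hS ?_, hx⟩
  rw [zero_mulVec, add_zero, hx, mulVec_sub, mulVec_sub, sub_eq_zero] at hcol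
  simpa only [mulVec_mulVec, Matrix.mul_assoc] using hcol

end CommRing

theorem inv_smul_mulVec_smul {n K : Type*} [Fintype n] [DecidableEq n] [Field K] {c : K}
    (hc : c ≠ 0) (M : Matrix n n K) (v : n → K) : (c • M)⁻¹ *ᵥ (c • v) = M⁻¹ *ᵥ v := by
  by_cases hM : IsUnit M.det
  · have hinv : (c • M)⁻¹ = c⁻¹ • M⁻¹ :=
      inv_eq_left_inv (by rw [smul_mul_smul, inv_mul_cancel₀ hc, one_smul, nonsing_inv_mul M hM])
    rw [hinv, smul_mulVec, mulVec_smul, smul_smul, inv_mul_cancel₀ hc, one_smul]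
  · have hcM : ¬IsUnit (c • M).det := by
      rwa [det_smul, IsUnit.mul_iff, and_iff_right (isUnit_iff_ne_zero.mpr (pow_ne_zero _ hc))]
    rw [nonsing_inv_apply_not_isUnit _ hM, nonsing_inv_apply_not_isUnit _ hcM, zero_mulVec,
      zero_mulVec]

theorem posDef_transpose_mul_diagonal_mul {m n : Type*} [Fintype m] [DecidableEq m] [Fintype n]
    {p : m → ℝ} (hp : ∀ i, 0 < p i) {E : Matrix m n ℝ}
    (hE : LinearIndependent ℝ fun j i => E i j) : (Eᵀ * diagonal p * E).PosDef := by
  simpa only [conjTranspose_eq_transpose_of_trivial] using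
    (PosDef.diagonal hp).conjTranspose_mul_mul_same (mulVec_injective_iff.mpr hE)

end Matrix

/-- Explicit Schur-complement solution of the Sinkhorn backward linear system:
with A = λ diag(p)⁻¹ and B = Ẽ, the system
[[A,Ẽ],[Ẽᵀ,0]][∇_c ℓ; −∇_{ab} ℓ] = [−g; 0] has solution
∇_{ab} ℓ = (Ẽᵀ diag p Ẽ)⁻¹ Ẽᵀ diag p g and
∇_c ℓ = −λ⁻¹ (diag p g − diag p Ẽ ∇_{ab} ℓ). -/
theorem sinkhorn_backward_schur_solution
    (N k : ℕ) (lam : ℝ) (hlam : 0 < lam)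
    (p : Fin N → ℝ) (hp : ∀ i, 0 < p i)
    (E : Matrix (Fin N) (Fin k) ℝ)
    (hE : LinearIndependent ℝ (fun j : Fin k => fun i : Fin N => E i j))
    (g gc : Fin N → ℝ) (gab : Fin k → ℝ)
    (hsys : Matrix.fromBlocks (lam • (Matrix.diagonal p)⁻¹) E Eᵀ
        (0 : Matrix (Fin k) (Fin k) ℝ) *ᵥ Sum.elim gc (-gab) = Sum.elim (-g) 0) :
    gab = (Eᵀ * Matrix.diagonal p * E)⁻¹ *ᵥ (Eᵀ *ᵥ (Matrix.diagonal p *ᵥ g)) ∧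
    gc = -lam⁻¹ • (Matrix.diagonal p *ᵥ g
        - Matrix.diagonal p *ᵥ (E *ᵥ gab)) := by
  have hD : IsUnit (diagonal p).det := by
    rw [det_diagonal]
    exact IsUnit.mk0 _ (Finset.prod_ne_zero_iff.mpr fun i _ => (hp i).ne')
  have hA_left_inv : (lam⁻¹ • diagonal p) * (lam • (diagonal p)⁻¹) = 1 := by
    rw [smul_mul_smul, inv_mul_cancel₀ hlam.ne', one_smul, mul_nonsing_inv _ hD]
  have hA_inv : (lam • (diagonal p)⁻¹)⁻¹ = lam⁻¹ • diagonal p := inv_eq_left_inv hA_left_inv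
  have hS : Eᵀ * (lam • (diagonal p)⁻¹)⁻¹ * E = lam⁻¹ • (Eᵀ * diagonal p * E) := by
    rw [hA_inv, Matrix.mul_smul, Matrix.smul_mul]
  have hS_unit : IsUnit (Eᵀ * (lam • (diagonal p)⁻¹)⁻¹ * E).det := by
    rw [hS, det_smul]
    exact (isUnit_iff_ne_zero.mpr (pow_ne_zero _ (inv_ne_zero hlam.ne'))).mul
      (posDef_transpose_mul_diagonal_mul hp hE).det_pos.ne'.isUnit
  obtain ⟨hgab, hgc⟩ := saddlePoint_solution (isUnit_det_of_left_inverse hA_left_inv) hS_unit hsys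
  refine ⟨?_, ?_⟩
  · rw [hgab, hS, hA_inv, smul_mulVec, mulVec_smul, inv_smul_mulVec_smul (inv_ne_zero hlam.ne')]
  · rw [hgc, hA_inv, smul_mulVec, mulVec_sub]
    module
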